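/- Let l > 0, 0 < l₀ < l, and suppose l₀/l is rational. Suppose moreover that every positive zero of Φ₀ is simple (Φ₀'(μ̄) ≠ 0 whenever μ̄ > 0 and Φ₀(μ̄) = 0), and let μ̄₁ < μ̄₂ < ... be the increasing enumeration of the positive zeros of Φ₀. Then for every sufficiently small ε > 0 (in particular with ε < (μ̄_{j+1} − μ̄_j)/2 for all j) there exists M > 0 such that for every index j with μ̄_j > M, the function Φ₀ + Φ₁ has exactly one zero in the open interval (μ̄_j − ε, μ̄_j + ε). -/

import Mathlib

/-- Φ₀(μ) = 2 sin(μ(l−l₀)) sin(μl₀) − sin(μl). -/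
noncomputable def Phi0 (l l₀ μ : ℝ) : ℝ :=
  2 * Real.sin (μ * (l - l₀)) * Real.sin (μ * l₀) - Real.sin (μ * l)

/-- Φ₁(μ), the lower-order part of the frequency equation. -/
noncomputable def Phi1 (E I ρ m κ l l₀ μ : ℝ) : ℝ :=
  Real.exp (-(μ * l)) *
    (2 * Real.sinh (μ * l) * Real.cos (μ * (l - 2 * l₀))
      - 2 * Real.sinh (μ * l) * Real.cos (μ * l)
      - 2 * Real.cosh (μ * l) * Real.sin (μ * l)
      + 2 * Real.sin (μ * l) * Real.cosh (μ * (l - 2 * l₀))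
      + Real.exp (μ * l) *
          (Real.cos (μ * l) + Real.sin (μ * l) - Real.cos (μ * (l - 2 * l₀)))
      - 8 * ρ / (m * μ) * Real.sinh (μ * l) * Real.sin (μ * l))
  + 2 * κ * ρ * Real.exp (-(μ * l)) / (E * I * m * μ ^ 4) *
      ((Real.cosh (μ * l) - Real.cosh (μ * (l - 2 * l₀))) * Real.sin (μ * l)
        + (Real.cos (μ * l) - Real.cos (μ * (l - 2 * l₀))) * Real.sinh (μ * l))



noncomputable def Phi0d (l l₀ μ : ℝ) : ℝ :=
  2 * (Real.cos (μ*(l-l₀)) * (l-l₀)) * Real.sin (μ*l₀)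
    + 2 * Real.sin (μ*(l-l₀)) * (Real.cos (μ*l₀) * l₀) - Real.cos (μ*l) * l

lemma hdsin (a μ : ℝ) : HasDerivAt (fun x : ℝ => Real.sin (x*a)) (Real.cos (μ*a)*a) μ := by
  simpa [Function.comp_def] using (Real.hasDerivAt_sin (μ*a)).comp μ ((hasDerivAt_id μ).mul_const a)

lemma hdcos (a μ : ℝ) : HasDerivAt (fun x : ℝ => Real.cos (x*a)) (-Real.sin (μ*a)*a) μ := by
  simpa [Function.comp_def] using (Real.hasDerivAt_cos (μ*a)).comp μ ((hasDerivAt_id μ).mul_const a)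

lemma hdsinh (a μ : ℝ) : HasDerivAt (fun x : ℝ => Real.sinh (x*a)) (Real.cosh (μ*a)*a) μ := by
  simpa [Function.comp_def] using (Real.hasDerivAt_sinh (μ*a)).comp μ ((hasDerivAt_id μ).mul_const a)

lemma hdcosh (a μ : ℝ) : HasDerivAt (fun x : ℝ => Real.cosh (x*a)) (Real.sinh (μ*a)*a) μ := by
  simpa [Function.comp_def] using (Real.hasDerivAt_cosh (μ*a)).comp μ ((hasDerivAt_id μ).mul_const a)

lemma hasDerivAt_phi0 (l l₀ μ : ℝ) : HasDerivAt (Phi0 l l₀) (Phi0d l l₀ μ) μ := by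
  have h := (((hdsin (l-l₀) μ).const_mul 2).mul (hdsin l₀ μ)).sub (hdsin l μ)
  have he : Phi0d l l₀ μ = 2 * (Real.cos (μ*(l-l₀))*(l-l₀)) * Real.sin (μ*l₀)
      + 2 * Real.sin (μ*(l-l₀)) * (Real.cos (μ*l₀)*l₀) - Real.cos (μ*l)*l := by
    unfold Phi0d; ring
  rw [he]
  exact h

lemma deriv_phi0 (l l₀ : ℝ) : deriv (Phi0 l l₀) = Phi0d l l₀ :=
  funext fun μ => (hasDerivAt_phi0 l l₀ μ).deriv

lemma phi0_cont (l l₀ : ℝ) : Continuous (Phi0 l l₀) := by unfold Phi0; fun_prop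

lemma phi0d_cont (l l₀ : ℝ) : Continuous (Phi0d l l₀) := by unfold Phi0d; fun_prop

lemma phi0_periodic (l l₀ : ℝ) (hl : 0 < l) (hrat : ∃ r : ℚ, l₀ / l = (r : ℝ)) :
    ∃ T : ℝ, 0 < T ∧ (∀ x, Phi0 l l₀ (x + T) = Phi0 l l₀ x)
      ∧ (∀ x, Phi0d l l₀ (x + T) = Phi0d l l₀ x) := by
  obtain ⟨r, hr⟩ := hrat
  set T : ℝ := 2 * Real.pi * r.den / l with hT
  have hl' : l ≠ 0 := ne_of_gt hl
  have hl₀ : l₀ = (r:ℝ) * l := by field_simp at hr; linarith [hr]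
  have hden : ((r.den:ℝ)) * (r:ℝ) = (r.num:ℝ) := by
    exact_mod_cast congrArg (fun z : ℚ => (z : ℝ)) (Rat.den_mul_eq_num r : ((r.den:ℚ)) * r = (r.num:ℚ))
  have hTpos : 0 < T := by
    have : (0:ℝ) < r.den := by exact_mod_cast r.den_pos
    positivity
  have hTl : T * l = ((r.den:ℤ):ℝ) * (2 * Real.pi) := by
    rw [hT]; field_simp; push_cast; ring
  have hTl₀ : T * l₀ = ((r.num:ℤ):ℝ) * (2 * Real.pi) := by
    rw [hT, hl₀]; field_simp; rw [← hden]
  have hTll : T * (l - l₀) = (((r.den:ℤ) - r.num:ℤ):ℝ) * (2 * Real.pi) := by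
    push_cast; push_cast at hTl hTl₀; nlinarith [hTl, hTl₀]
  refine ⟨T, hTpos, ?_, ?_⟩ <;> intro x
  · unfold Phi0
    rw [add_mul x T, add_mul x T, add_mul x T, hTl₀, hTl, hTll,
      Real.sin_add_int_mul_two_pi, Real.sin_add_int_mul_two_pi, Real.sin_add_int_mul_two_pi]
  · unfold Phi0d
    rw [add_mul x T, add_mul x T, add_mul x T, hTl₀, hTl, hTll,
      Real.sin_add_int_mul_two_pi, Real.sin_add_int_mul_two_pi, Real.cos_add_int_mul_two_pi,
      Real.cos_add_int_mul_two_pi, Real.cos_add_int_mul_two_pi]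


noncomputable def Qf (l l₀ μ : ℝ) : ℝ :=
  (Real.cosh (μ*l) - Real.cosh (μ*(l-2*l₀))) * Real.sin (μ*l)
    + (Real.cos (μ*l) - Real.cos (μ*(l-2*l₀))) * Real.sinh (μ*l)

noncomputable def Qdf (l l₀ μ : ℝ) : ℝ :=
  (Real.sinh (μ*l)*l - Real.sinh (μ*(l-2*l₀))*(l-2*l₀)) * Real.sin (μ*l)
    + (Real.cosh (μ*l) - Real.cosh (μ*(l-2*l₀))) * (Real.cos (μ*l)*l)
    + ((-(Real.sin (μ*l)*l) + Real.sin (μ*(l-2*l₀))*(l-2*l₀)) * Real.sinh (μ*l)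
      + (Real.cos (μ*l) - Real.cos (μ*(l-2*l₀))) * (Real.cosh (μ*l)*l))

lemma mulAbsLe {a b A B : ℝ} (ha : |a| ≤ A) (hb : |b| ≤ B) : |a*b| ≤ A*B := by
  rw [abs_mul]; exact mul_le_mul ha hb (abs_nonneg _) (le_trans (abs_nonneg _) ha)

lemma exp_neg_le {y : ℝ} (hy : 0 < y) : Real.exp (-y) ≤ 1/y := by
  rw [Real.exp_neg]
  have h1 : y ≤ Real.exp y := by nlinarith [Real.add_one_le_exp y]
  calc (Real.exp y)⁻¹ = 1 / Real.exp y := (one_div _).symm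
    _ ≤ 1/y := one_div_le_one_div_of_le hy h1

lemma exp_cosh_le {x y : ℝ} (hx : 0 ≤ x) (hy : |y| ≤ x) : Real.exp (-x) * Real.cosh y ≤ 1 := by
  have h1 : Real.cosh y ≤ Real.cosh x := Real.cosh_le_cosh.mpr (by rwa [abs_of_nonneg hx])
  have h2 : Real.exp (-x) * Real.cosh x ≤ 1 := by
    rw [Real.cosh_eq, Real.exp_neg]
    have hp : 0 < Real.exp x := Real.exp_pos x
    have hv : Real.exp x * (Real.exp x)⁻¹ = 1 := mul_inv_cancel₀ (ne_of_gt hp)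
    have hv1 : (Real.exp x)⁻¹ ≤ 1 := by
      rw [← Real.exp_neg]; exact Real.exp_le_one_iff.mpr (by linarith)
    have hv0 : 0 < (Real.exp x)⁻¹ := by positivity
    nlinarith [sq_nonneg ((Real.exp x)⁻¹)]
  nlinarith [Real.exp_pos (-x)]

lemma exp_sinh_le {x y : ℝ} (hx : 0 ≤ x) (hy : |y| ≤ x) : Real.exp (-x) * |Real.sinh y| ≤ 1 := by
  have h1 : |Real.sinh y| ≤ Real.cosh y := by
    rw [Real.abs_sinh, ← Real.cosh_abs]
    exact (Real.sinh_lt_cosh _).le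
  nlinarith [exp_cosh_le hx hy, Real.exp_pos (-x), Real.cosh_pos y]

lemma argc_le {l l₀ μ : ℝ} (hl₀ : 0 < l₀) (hll : l₀ < l) (hμ : 0 ≤ μ) :
    |μ*(l-2*l₀)| ≤ μ*l := by
  rw [abs_mul, abs_of_nonneg hμ]
  have : |l-2*l₀| ≤ l := abs_le.mpr ⟨by linarith, by linarith⟩
  nlinarith

lemma argl_eq {l μ : ℝ} (hl : 0 < l) (hμ : 0 ≤ μ) : |μ*l| ≤ μ*l := by
  rw [abs_mul, abs_of_nonneg hμ, abs_of_pos hl]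

lemma expQf_bound {l l₀ μ : ℝ} (hl : 0 < l) (hl₀ : 0 < l₀) (hll : l₀ < l) (hμ : 0 ≤ μ) :
    |Real.exp (-(μ*l)) * Qf l l₀ μ| ≤ 3 := by
  have hml : (0:ℝ) ≤ μ*l := by positivity
  have a1 := exp_cosh_le hml (argl_eq hl hμ)
  have a2 := exp_cosh_le hml (argc_le hl₀ hll hμ)
  have a3 := exp_sinh_le hml (argl_eq hl hμ)
  have hp := Real.exp_pos (-(μ*l))
  have hs := Real.abs_sin_le_one (μ*l)
  have hc1 := Real.abs_cos_le_one (μ*l)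
  have hc2 := Real.abs_cos_le_one (μ*(l-2*l₀))
  have hQ : |Qf l l₀ μ| ≤ |Real.cosh (μ*l) - Real.cosh (μ*(l-2*l₀))| * 1
      + 2 * |Real.sinh (μ*l)| := by
    unfold Qf
    calc |_ + _| ≤ |(Real.cosh (μ*l) - Real.cosh (μ*(l-2*l₀))) * Real.sin (μ*l)|
        + |(Real.cos (μ*l) - Real.cos (μ*(l-2*l₀))) * Real.sinh (μ*l)| := abs_add_le _ _
      _ ≤ |Real.cosh (μ*l) - Real.cosh (μ*(l-2*l₀))| * 1 + 2 * |Real.sinh (μ*l)| := by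
          refine add_le_add (mulAbsLe le_rfl hs) ?_
          rw [abs_mul]
          have h2 : |Real.cos (μ*l) - Real.cos (μ*(l-2*l₀))| ≤ 2 := by
            calc |Real.cos (μ*l) - Real.cos (μ*(l-2*l₀))| ≤ |Real.cos (μ*l)| + |Real.cos (μ*(l-2*l₀))| := abs_sub _ _
              _ ≤ 2 := by linarith
          exact mul_le_mul_of_nonneg_right h2 (abs_nonneg _)
  have hcc : |Real.cosh (μ*l) - Real.cosh (μ*(l-2*l₀))| = Real.cosh (μ*l) - Real.cosh (μ*(l-2*l₀)) := by
    rw [abs_of_nonneg]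
    have := Real.cosh_le_cosh.mpr (le_trans (argc_le hl₀ hll hμ) (le_abs_self _))
    linarith [this]
  rw [abs_mul, abs_of_pos hp]
  rw [hcc] at hQ
  have hcoshc : 0 < Real.cosh (μ*(l-2*l₀)) := Real.cosh_pos _
  nlinarith [mul_le_mul_of_nonneg_left hQ hp.le]

lemma expQdf_bound {l l₀ μ : ℝ} (hl : 0 < l) (hl₀ : 0 < l₀) (hll : l₀ < l) (hμ : 0 ≤ μ) :
    |Real.exp (-(μ*l)) * Qdf l l₀ μ| ≤ 7*l := by
  have hml : (0:ℝ) ≤ μ*l := by positivity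
  have a1 := exp_cosh_le hml (argl_eq hl hμ)
  have a2 := exp_cosh_le hml (argc_le hl₀ hll hμ)
  have a3 := exp_sinh_le hml (argl_eq hl hμ)
  have a4 := exp_sinh_le hml (argc_le hl₀ hll hμ)
  have hp := Real.exp_pos (-(μ*l))
  have hs := Real.abs_sin_le_one (μ*l)
  have hs2 := Real.abs_sin_le_one (μ*(l-2*l₀))
  have hc1 := Real.abs_cos_le_one (μ*l)
  have hc2 := Real.abs_cos_le_one (μ*(l-2*l₀))
  have hcabs : |l-2*l₀| ≤ l := abs_le.mpr ⟨by linarith, by linarith⟩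
  set A := Real.exp (-(μ*l)) with hA
  -- bound the four summands of Qdf, each multiplied by A
  have b1 : A * |(Real.sinh (μ*l)*l - Real.sinh (μ*(l-2*l₀))*(l-2*l₀)) * Real.sin (μ*l)| ≤ 2*l := by
    have h1 : |(Real.sinh (μ*l)*l - Real.sinh (μ*(l-2*l₀))*(l-2*l₀)) * Real.sin (μ*l)|
        ≤ ( |Real.sinh (μ*l)| *l + |Real.sinh (μ*(l-2*l₀))| *l) * 1 := by
      refine mulAbsLe ?_ hs
      calc |Real.sinh (μ*l)*l - Real.sinh (μ*(l-2*l₀))*(l-2*l₀)|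
          ≤ |Real.sinh (μ*l)*l| + |Real.sinh (μ*(l-2*l₀))*(l-2*l₀)| := abs_sub _ _
        _ ≤ |Real.sinh (μ*l)| *l + |Real.sinh (μ*(l-2*l₀))| *l := by
            rw [abs_mul, abs_mul, abs_of_pos hl]
            have := mul_le_mul_of_nonneg_left hcabs (abs_nonneg (Real.sinh (μ*(l-2*l₀))))
            linarith
    nlinarith [mul_le_mul_of_nonneg_left h1 hp.le, abs_nonneg (Real.sinh (μ*(l-2*l₀))),
      abs_nonneg (Real.sinh (μ*l))]
  have b2 : A * |(Real.cosh (μ*l) - Real.cosh (μ*(l-2*l₀))) * (Real.cos (μ*l)*l)| ≤ l := by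
    have hcc : |Real.cosh (μ*l) - Real.cosh (μ*(l-2*l₀))| = Real.cosh (μ*l) - Real.cosh (μ*(l-2*l₀)) := by
      rw [abs_of_nonneg]
      have := Real.cosh_le_cosh.mpr (le_trans (argc_le hl₀ hll hμ) (le_abs_self _))
      linarith
    have h1 : |(Real.cosh (μ*l) - Real.cosh (μ*(l-2*l₀))) * (Real.cos (μ*l)*l)|
        ≤ (Real.cosh (μ*l) - Real.cosh (μ*(l-2*l₀))) * l := by
      rw [← hcc]
      refine mulAbsLe (le_of_eq (abs_abs _)) ?_
      rw [abs_mul, abs_of_pos hl]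
      nlinarith
    nlinarith [mul_le_mul_of_nonneg_left h1 hp.le, Real.cosh_pos (μ*(l-2*l₀)),
      mul_pos hp (Real.cosh_pos (μ*(l-2*l₀)))]
  have b3 : A * |(-(Real.sin (μ*l)*l) + Real.sin (μ*(l-2*l₀))*(l-2*l₀)) * Real.sinh (μ*l)| ≤ 2*l := by
    have h1 : |(-(Real.sin (μ*l)*l) + Real.sin (μ*(l-2*l₀))*(l-2*l₀)) * Real.sinh (μ*l)|
        ≤ (2*l) * |Real.sinh (μ*l)| := by
      rw [abs_mul]
      refine mul_le_mul_of_nonneg_right ?_ (abs_nonneg _)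
      calc |(-(Real.sin (μ*l)*l) + Real.sin (μ*(l-2*l₀))*(l-2*l₀))|
          ≤ |(-(Real.sin (μ*l)*l))| + |Real.sin (μ*(l-2*l₀))*(l-2*l₀)| := abs_add_le _ _
        _ ≤ 2*l := by
            rw [abs_neg, abs_mul, abs_mul, abs_of_pos hl]
            nlinarith [abs_nonneg (Real.sin (μ*(l-2*l₀))), abs_nonneg (Real.sin (μ*l))]
    nlinarith [mul_le_mul_of_nonneg_left h1 hp.le, abs_nonneg (Real.sinh (μ*l))]
  have b4 : A * |(Real.cos (μ*l) - Real.cos (μ*(l-2*l₀))) * (Real.cosh (μ*l)*l)| ≤ 2*l := by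
    have h1 : |(Real.cos (μ*l) - Real.cos (μ*(l-2*l₀))) * (Real.cosh (μ*l)*l)|
        ≤ 2 * (Real.cosh (μ*l)*l) := by
      refine mulAbsLe ?_ ?_
      · calc |Real.cos (μ*l) - Real.cos (μ*(l-2*l₀))| ≤ |Real.cos (μ*l)| + |Real.cos (μ*(l-2*l₀))| := abs_sub _ _
          _ ≤ 2 := by linarith
      · rw [abs_mul, abs_of_pos hl, abs_of_pos (Real.cosh_pos (μ*l))]
    nlinarith [mul_le_mul_of_nonneg_left h1 hp.le, Real.cosh_pos (μ*l)]
  rw [abs_mul, abs_of_pos hp]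
  have hQd : |Qdf l l₀ μ| ≤ |(Real.sinh (μ*l)*l - Real.sinh (μ*(l-2*l₀))*(l-2*l₀)) * Real.sin (μ*l)|
      + |(Real.cosh (μ*l) - Real.cosh (μ*(l-2*l₀))) * (Real.cos (μ*l)*l)|
      + ( |(-(Real.sin (μ*l)*l) + Real.sin (μ*(l-2*l₀))*(l-2*l₀)) * Real.sinh (μ*l)|
        + |(Real.cos (μ*l) - Real.cos (μ*(l-2*l₀))) * (Real.cosh (μ*l)*l)|) := by
    unfold Qdf
    refine le_trans (abs_add_le _ _) (add_le_add (abs_add_le _ _) (abs_add_le _ _))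
  nlinarith [mul_le_mul_of_nonneg_left hQd hp.le]

noncomputable def PsiA (E I ρ m κ l l₀ μ : ℝ) : ℝ :=
  Real.exp (-(2*μ*l)) * (Real.cos (μ*l) - Real.sin (μ*l) - Real.cos (μ*(l-2*l₀)))
  + Real.sin (μ*l) * (Real.exp (-(2*μ*l₀)) + Real.exp (-(2*μ*(l-l₀))))
  - (4*ρ/m) * (1 - Real.exp (-(2*μ*l))) * Real.sin (μ*l) / μ
  + (2*κ*ρ/(E*I*m)) * (Real.exp (-(μ*l)) * Qf l l₀ μ) / μ^4

noncomputable def PsiAd (E I ρ m κ l l₀ μ : ℝ) : ℝ :=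
  (Real.exp (-(2*μ*l)) * (-(2*l)) * (Real.cos (μ*l) - Real.sin (μ*l) - Real.cos (μ*(l-2*l₀)))
    + Real.exp (-(2*μ*l)) * (-(Real.sin (μ*l)*l) - Real.cos (μ*l)*l + Real.sin (μ*(l-2*l₀))*(l-2*l₀)))
  + (Real.cos (μ*l)*l * (Real.exp (-(2*μ*l₀)) + Real.exp (-(2*μ*(l-l₀))))
    + Real.sin (μ*l) * (Real.exp (-(2*μ*l₀))*(-(2*l₀)) + Real.exp (-(2*μ*(l-l₀)))*(-(2*(l-l₀)))))
  - (4*ρ/m) * (((Real.exp (-(2*μ*l))*(2*l))*Real.sin (μ*l)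
        + (1-Real.exp (-(2*μ*l)))*(Real.cos (μ*l)*l))*μ
      - (1-Real.exp (-(2*μ*l)))*Real.sin (μ*l)) / μ^2
  + (2*κ*ρ/(E*I*m)) * ((Real.exp (-(μ*l))*(-l) * Qf l l₀ μ + Real.exp (-(μ*l)) * Qdf l l₀ μ)*μ^4
      - (Real.exp (-(μ*l)) * Qf l l₀ μ)*(4*μ^3)) / μ^8

lemma psiA_bound (E I ρ m κ l l₀ : ℝ) (hE : 0 < E) (hI : 0 < I) (hρ : 0 < ρ) (hm : 0 < m)
    (hκ : 0 < κ) (hl : 0 < l) (hl₀ : 0 < l₀) (hll : l₀ < l) :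
    ∃ C, 0 < C ∧ ∀ μ : ℝ, 1 ≤ μ →
      |PsiA E I ρ m κ l l₀ μ| ≤ C / μ ∧ |PsiAd E I ρ m κ l l₀ μ| ≤ C / μ := by
  have hLL : 0 < l - l₀ := by linarith
  set K : ℝ := 2*κ*ρ/(E*I*m) with hK
  have hKpos : 0 < K := by positivity
  refine ⟨(3/(2*l) + (1/(2*l₀) + 1/(2*(l-l₀))) + 4*ρ/m + 3*K)
    + (9/2 + (l/(2*l₀) + l/(2*(l-l₀)) + 2) + 4*ρ/m*(3*l+1) + K*(10*l+12)), by positivity, ?_⟩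
  intro μ hμ1
  have hμ : (0:ℝ) < μ := by linarith
  -- exponential bounds
  have hE2l : Real.exp (-(2*μ*l)) ≤ 1/(2*μ*l) := exp_neg_le (by positivity)
  have hE2l0 : Real.exp (-(2*μ*l₀)) ≤ 1/(2*μ*l₀) := exp_neg_le (by positivity)
  have hE2ll : Real.exp (-(2*μ*(l-l₀))) ≤ 1/(2*μ*(l-l₀)) := exp_neg_le (by positivity)
  have hp2l := Real.exp_pos (-(2*μ*l))
  have hp2l0 := Real.exp_pos (-(2*μ*l₀))
  have hp2ll := Real.exp_pos (-(2*μ*(l-l₀)))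
  have hE2l1 : Real.exp (-(2*μ*l)) ≤ 1 := Real.exp_le_one_iff.mpr (by nlinarith)
  have hs := Real.abs_sin_le_one (μ*l)
  have hsc := Real.abs_sin_le_one (μ*(l-2*l₀))
  have hc1 := Real.abs_cos_le_one (μ*l)
  have hc2 := Real.abs_cos_le_one (μ*(l-2*l₀))
  have hW : |Real.cos (μ*l) - Real.sin (μ*l) - Real.cos (μ*(l-2*l₀))| ≤ 3 := by
    have h1 := abs_le.mp hs; have h2 := abs_le.mp hc1; have h3 := abs_le.mp hc2
    exact abs_le.mpr ⟨by linarith, by linarith⟩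
  have h1me : |1 - Real.exp (-(2*μ*l))| ≤ 1 := abs_le.mpr ⟨by linarith, by linarith⟩
  have habs2l : |Real.exp (-(2*μ*l))| ≤ 1/(2*μ*l) := by rwa [abs_of_pos hp2l]
  have habssum : |Real.exp (-(2*μ*l₀)) + Real.exp (-(2*μ*(l-l₀)))| ≤ 1/(2*μ*l₀) + 1/(2*μ*(l-l₀)) := by
    rw [abs_of_pos (by positivity)]; exact add_le_add hE2l0 hE2ll
  have hQ3 := expQf_bound hl hl₀ hll hμ.le
  have hQd7 := expQdf_bound hl hl₀ hll hμ.le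
  have hμ4 : μ ≤ μ^4 := by
    calc μ = μ^1 := (pow_one μ).symm
      _ ≤ μ^4 := pow_le_pow_right₀ hμ1 (by norm_num)
  have habs2l0 : |Real.exp (-(2*μ*l₀))| ≤ 1/(2*μ*l₀) := by rwa [abs_of_pos hp2l0]
  have habs2ll : |Real.exp (-(2*μ*(l-l₀)))| ≤ 1/(2*μ*(l-l₀)) := by rwa [abs_of_pos hp2ll]
  constructor
  · -- bound on PsiA
    unfold PsiA
    rw [← hK]
    have t1 : |Real.exp (-(2*μ*l)) * (Real.cos (μ*l) - Real.sin (μ*l) - Real.cos (μ*(l-2*l₀)))|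
        ≤ (3/(2*l))/μ := by
      refine le_trans (mulAbsLe habs2l hW) (le_of_eq ?_)
      field_simp
    have t2 : |Real.sin (μ*l) * (Real.exp (-(2*μ*l₀)) + Real.exp (-(2*μ*(l-l₀))))|
        ≤ (1/(2*l₀) + 1/(2*(l-l₀)))/μ := by
      refine le_trans (mulAbsLe hs habssum) (le_of_eq ?_)
      field_simp
    have t3 : |4*ρ/m * (1 - Real.exp (-(2*μ*l))) * Real.sin (μ*l) / μ| ≤ (4*ρ/m)/μ := by
      rw [abs_div, abs_of_pos hμ]
      have hnum : |4*ρ/m * (1 - Real.exp (-(2*μ*l))) * Real.sin (μ*l)| ≤ 4*ρ/m := by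
        have := mulAbsLe (mulAbsLe (le_of_eq (abs_of_pos (by positivity : (0:ℝ) < 4*ρ/m))) h1me) hs
        simpa using this
      gcongr
    have t4 : |K * (Real.exp (-(μ*l)) * Qf l l₀ μ) / μ^4| ≤ (3*K)/μ := by
      rw [abs_div, abs_of_pos (by positivity : (0:ℝ) < μ^4)]
      have hnum : |K * (Real.exp (-(μ*l)) * Qf l l₀ μ)| ≤ 3*K := by
        refine le_trans (mulAbsLe (le_of_eq (abs_of_pos hKpos)) hQ3) (le_of_eq (by ring))
      calc |K * (Real.exp (-(μ*l)) * Qf l l₀ μ)| / μ^4 ≤ (3*K) / μ^4 := by gcongr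
        _ ≤ (3*K)/μ := by gcongr
    have htri : ∀ a b c d : ℝ, |a + b - c + d| ≤ |a| + |b| + |c| + |d| := by
      intro a b c d
      calc |a + b - c + d| ≤ |a + b - c| + |d| := abs_add_le _ _
        _ ≤ |a + b| + |c| + |d| := by linarith [abs_sub (a+b) c]
        _ ≤ |a| + |b| + |c| + |d| := by linarith [abs_add_le a b]
    refine le_trans (htri _ _ _ _)
      (le_trans (add_le_add (add_le_add (add_le_add t1 t2) t3) t4) ?_)
    rw [← add_div, ← add_div, ← add_div]
    have hrest : (0:ℝ) ≤ 9/2 + (l/(2*l₀) + l/(2*(l-l₀)) + 2) + 4*ρ/m*(3*l+1) + K*(10*l+12) := by positivity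
    exact (div_le_div_iff_of_pos_right hμ).mpr (by linarith)
  · -- bound on PsiAd
    unfold PsiAd
    rw [← hK]
    have d1 : |Real.exp (-(2*μ*l)) * (-(2*l)) * (Real.cos (μ*l) - Real.sin (μ*l) - Real.cos (μ*(l-2*l₀)))
        + Real.exp (-(2*μ*l)) * (-(Real.sin (μ*l)*l) - Real.cos (μ*l)*l + Real.sin (μ*(l-2*l₀))*(l-2*l₀))|
        ≤ (9/2)/μ := by
      have hin : |(-(Real.sin (μ*l)*l) - Real.cos (μ*l)*l + Real.sin (μ*(l-2*l₀))*(l-2*l₀))| ≤ 3*l := by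
        have h1 : |Real.sin (μ*l)*l| ≤ 1*l := mulAbsLe hs (le_of_eq (abs_of_pos hl))
        have h2 : |Real.cos (μ*l)*l| ≤ 1*l := mulAbsLe hc1 (le_of_eq (abs_of_pos hl))
        have h3 : |Real.sin (μ*(l-2*l₀))*(l-2*l₀)| ≤ 1*l :=
          mulAbsLe hsc (abs_le.mpr ⟨by linarith, by linarith⟩)
        have h1' := abs_le.mp h1; have h2' := abs_le.mp h2; have h3' := abs_le.mp h3
        exact abs_le.mpr ⟨by linarith, by linarith⟩
      have h11 : |Real.exp (-(2*μ*l)) * (-(2*l)) * (Real.cos (μ*l) - Real.sin (μ*l) - Real.cos (μ*(l-2*l₀)))|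
          ≤ (1/(2*μ*l))*(2*l)*3 := by
        refine mulAbsLe (mulAbsLe habs2l (le_of_eq ?_)) hW
        rw [abs_neg, abs_of_pos (by positivity : (0:ℝ) < 2*l)]
      have h12 : |Real.exp (-(2*μ*l)) * (-(Real.sin (μ*l)*l) - Real.cos (μ*l)*l + Real.sin (μ*(l-2*l₀))*(l-2*l₀))|
          ≤ (1/(2*μ*l))*(3*l) := mulAbsLe habs2l hin
      refine le_trans (abs_add_le _ _) (le_trans (add_le_add h11 h12) (le_of_eq ?_))
      field_simp; ring
    have d2 : |Real.cos (μ*l)*l * (Real.exp (-(2*μ*l₀)) + Real.exp (-(2*μ*(l-l₀))))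
        + Real.sin (μ*l) * (Real.exp (-(2*μ*l₀))*(-(2*l₀)) + Real.exp (-(2*μ*(l-l₀)))*(-(2*(l-l₀))))|
        ≤ (l/(2*l₀) + l/(2*(l-l₀)) + 2)/μ := by
      have h21 : |Real.cos (μ*l)*l * (Real.exp (-(2*μ*l₀)) + Real.exp (-(2*μ*(l-l₀))))|
          ≤ (1*l) * (1/(2*μ*l₀) + 1/(2*μ*(l-l₀))) := by
        refine mulAbsLe (mulAbsLe hc1 (le_of_eq (abs_of_pos hl))) habssum
      have h22 : |Real.sin (μ*l) * (Real.exp (-(2*μ*l₀))*(-(2*l₀)) + Real.exp (-(2*μ*(l-l₀)))*(-(2*(l-l₀))))|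
          ≤ 1 * ((1/(2*μ*l₀))*(2*l₀) + (1/(2*μ*(l-l₀)))*(2*(l-l₀))) := by
        refine mulAbsLe hs ?_
        refine le_trans (abs_add_le _ _) (add_le_add ?_ ?_)
        · refine mulAbsLe habs2l0 ?_
          rw [abs_neg, abs_of_pos (by positivity : (0:ℝ) < 2*l₀)]
        · refine mulAbsLe habs2ll ?_
          rw [abs_neg, abs_of_pos (by positivity : (0:ℝ) < 2*(l-l₀))]
      refine le_trans (abs_add_le _ _) (le_trans (add_le_add h21 h22) (le_of_eq ?_))
      field_simp; ring
    have d3 : |4*ρ/m * (((Real.exp (-(2*μ*l))*(2*l))*Real.sin (μ*l)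
          + (1-Real.exp (-(2*μ*l)))*(Real.cos (μ*l)*l))*μ
        - (1-Real.exp (-(2*μ*l)))*Real.sin (μ*l)) / μ^2| ≤ (4*ρ/m*(3*l+1))/μ := by
      rw [abs_div, abs_of_pos (by positivity : (0:ℝ) < μ^2)]
      have hX : |(Real.exp (-(2*μ*l))*(2*l))*Real.sin (μ*l)
          + (1-Real.exp (-(2*μ*l)))*(Real.cos (μ*l)*l)| ≤ 3*l := by
        refine le_trans (abs_add_le _ _) ?_
        have i1 : |(Real.exp (-(2*μ*l))*(2*l))*Real.sin (μ*l)| ≤ (1*(2*l))*1 := by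
          refine mulAbsLe (mulAbsLe ?_ (le_of_eq (abs_of_pos (by positivity : (0:ℝ) < 2*l)))) hs
          rwa [abs_of_pos hp2l]
        have i2 : |(1-Real.exp (-(2*μ*l)))*(Real.cos (μ*l)*l)| ≤ 1*(1*l) := by
          refine mulAbsLe h1me (mulAbsLe hc1 (le_of_eq (abs_of_pos hl)))
        linarith
      have hN : |((Real.exp (-(2*μ*l))*(2*l))*Real.sin (μ*l)
          + (1-Real.exp (-(2*μ*l)))*(Real.cos (μ*l)*l))*μ
          - (1-Real.exp (-(2*μ*l)))*Real.sin (μ*l)| ≤ (3*l+1)*μ := by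
        refine le_trans (abs_sub _ _) ?_
        have i3 : |((Real.exp (-(2*μ*l))*(2*l))*Real.sin (μ*l)
            + (1-Real.exp (-(2*μ*l)))*(Real.cos (μ*l)*l))*μ| ≤ (3*l)*μ := by
          refine mulAbsLe hX (le_of_eq (abs_of_pos hμ))
        have i4 : |(1-Real.exp (-(2*μ*l)))*Real.sin (μ*l)| ≤ 1*1 := mulAbsLe h1me hs
        linarith
      have hnum : |4*ρ/m| * |((Real.exp (-(2*μ*l))*(2*l))*Real.sin (μ*l)
          + (1-Real.exp (-(2*μ*l)))*(Real.cos (μ*l)*l))*μ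
          - (1-Real.exp (-(2*μ*l)))*Real.sin (μ*l)| ≤ (4*ρ/m)*((3*l+1)*μ) := by
        rw [abs_of_pos (by positivity : (0:ℝ) < 4*ρ/m)]
        exact mul_le_mul_of_nonneg_left hN (by positivity)
      rw [abs_mul]
      refine le_trans ((div_le_div_iff_of_pos_right (by positivity : (0:ℝ) < μ^2)).mpr hnum) (le_of_eq ?_)
      field_simp
    have d4 : |K * ((Real.exp (-(μ*l))*(-l) * Qf l l₀ μ + Real.exp (-(μ*l)) * Qdf l l₀ μ)*μ^4
        - (Real.exp (-(μ*l)) * Qf l l₀ μ)*(4*μ^3)) / μ^8| ≤ (K*(10*l+12))/μ := by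
      rw [abs_div, abs_of_pos (by positivity : (0:ℝ) < μ^8)]
      have j1 : |Real.exp (-(μ*l))*(-l) * Qf l l₀ μ| ≤ l*3 := by
        have : Real.exp (-(μ*l))*(-l) * Qf l l₀ μ = (-l) * (Real.exp (-(μ*l)) * Qf l l₀ μ) := by ring
        rw [this]
        refine mulAbsLe (le_of_eq (by rw [abs_neg, abs_of_pos hl])) hQ3
      have j2 : |Real.exp (-(μ*l))*(-l) * Qf l l₀ μ + Real.exp (-(μ*l)) * Qdf l l₀ μ| ≤ 10*l := by
        refine le_trans (abs_add_le _ _) ?_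
        linarith [hQd7]
      have j3 : |(Real.exp (-(μ*l))*(-l) * Qf l l₀ μ + Real.exp (-(μ*l)) * Qdf l l₀ μ)*μ^4|
          ≤ (10*l)*μ^4 := mulAbsLe j2 (le_of_eq (abs_of_pos (by positivity)))
      have j4 : |(Real.exp (-(μ*l)) * Qf l l₀ μ)*(4*μ^3)| ≤ 3*(4*μ^3) :=
        mulAbsLe hQ3 (le_of_eq (abs_of_pos (by positivity)))
      have j5 : |(Real.exp (-(μ*l))*(-l) * Qf l l₀ μ + Real.exp (-(μ*l)) * Qdf l l₀ μ)*μ^4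
          - (Real.exp (-(μ*l)) * Qf l l₀ μ)*(4*μ^3)| ≤ (10*l+12)*μ^4 := by
        refine le_trans (abs_sub _ _) ?_
        have hμ34 : μ^3 ≤ μ^4 := pow_le_pow_right₀ hμ1 (by norm_num)
        linarith
      have hnum : |K| * |(Real.exp (-(μ*l))*(-l) * Qf l l₀ μ + Real.exp (-(μ*l)) * Qdf l l₀ μ)*μ^4
          - (Real.exp (-(μ*l)) * Qf l l₀ μ)*(4*μ^3)| ≤ K*((10*l+12)*μ^4) := by
        rw [abs_of_pos hKpos]
        exact mul_le_mul_of_nonneg_left j5 hKpos.le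
      rw [abs_mul]
      refine le_trans ((div_le_div_iff_of_pos_right (by positivity : (0:ℝ) < μ^8)).mpr hnum) ?_
      calc K*((10*l+12)*μ^4) / μ^8 = (K*(10*l+12))/μ^4 := by field_simp
        _ ≤ (K*(10*l+12))/μ := by gcongr
    have htri : ∀ a b c d : ℝ, |a + b - c + d| ≤ |a| + |b| + |c| + |d| := by
      intro a b c d
      calc |a + b - c + d| ≤ |a + b - c| + |d| := abs_add_le _ _
        _ ≤ |a + b| + |c| + |d| := by linarith [abs_sub (a+b) c]
        _ ≤ |a| + |b| + |c| + |d| := by linarith [abs_add_le a b]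
    refine le_trans (htri _ _ _ _)
      (le_trans (add_le_add (add_le_add (add_le_add d1 d2) d3) d4) ?_)
    rw [← add_div, ← add_div, ← add_div]
    have hfirst : (0:ℝ) ≤ 3/(2*l) + (1/(2*l₀) + 1/(2*(l-l₀))) + 4*ρ/m + 3*K := by positivity
    exact (div_le_div_iff_of_pos_right hμ).mpr (by linarith)


lemma hdexp2 (a μ : ℝ) : HasDerivAt (fun x : ℝ => Real.exp (-(2*x*a))) (Real.exp (-(2*μ*a)) * (-(2*a))) μ := by
  have hin : HasDerivAt (fun x : ℝ => -(2*x*a)) (-(2*a)) μ := by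
    simpa [Pi.neg_def] using (((hasDerivAt_id μ).const_mul (2:ℝ)).mul_const a).neg
  simpa [Function.comp_def] using (Real.hasDerivAt_exp (-(2*μ*a))).comp μ hin

lemma hdexp1 (a μ : ℝ) : HasDerivAt (fun x : ℝ => Real.exp (-(x*a))) (Real.exp (-(μ*a)) * (-a)) μ := by
  have hin : HasDerivAt (fun x : ℝ => -(x*a)) (-a) μ := by
    simpa [Pi.neg_def] using ((hasDerivAt_id μ).mul_const a).neg
  simpa [Function.comp_def] using (Real.hasDerivAt_exp (-(μ*a))).comp μ hin

lemma hdQf (l l₀ μ : ℝ) : HasDerivAt (Qf l l₀) (Qdf l l₀ μ) μ := by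
  have h := (((hdcosh l μ).sub (hdcosh (l-2*l₀) μ)).mul (hdsin l μ)).add
    (((hdcos l μ).sub (hdcos (l-2*l₀) μ)).mul (hdsinh l μ))
  have he : Qdf l l₀ μ = (Real.sinh (μ*l)*l - Real.sinh (μ*(l-2*l₀))*(l-2*l₀)) * Real.sin (μ*l)
      + (Real.cosh (μ*l) - Real.cosh (μ*(l-2*l₀))) * (Real.cos (μ*l)*l)
      + ((-Real.sin (μ*l)*l - -Real.sin (μ*(l-2*l₀))*(l-2*l₀)) * Real.sinh (μ*l)
        + (Real.cos (μ*l) - Real.cos (μ*(l-2*l₀))) * (Real.cosh (μ*l)*l)) := by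
    unfold Qdf; ring
  rw [he]
  exact h

lemma hasDerivAt_psiA (E I ρ m κ l l₀ μ : ℝ) (hμ : μ ≠ 0) :
    HasDerivAt (PsiA E I ρ m κ l l₀) (PsiAd E I ρ m κ l l₀ μ) μ := by
  have h1 := (hdexp2 l μ).mul (((hdcos l μ).sub (hdsin l μ)).sub (hdcos (l-2*l₀) μ))
  have h2 := (hdsin l μ).mul ((hdexp2 l₀ μ).add (hdexp2 (l-l₀) μ))
  have h3 := ((((hasDerivAt_const μ (1:ℝ)).sub (hdexp2 l μ)).const_mul (4*ρ/m)).mul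
      (hdsin l μ)).div (hasDerivAt_id' μ) hμ
  have h4 := (((hdexp1 l μ).mul (hdQf l l₀ μ)).const_mul (2*κ*ρ/(E*I*m))).div
      (hasDerivAt_pow 4 μ) (pow_ne_zero 4 hμ)
  have h := ((h1.add h2).sub h3).add h4
  refine HasDerivAt.congr_deriv h ?_
  unfold PsiAd Qdf
  simp only [Pi.add_apply, Pi.sub_apply, Pi.mul_apply, Pi.div_apply]
  push_cast
  ring


lemma phi1_eq_psiA (E I ρ m κ l l₀ μ : ℝ) (hE : E ≠ 0) (hI : I ≠ 0) (hm : m ≠ 0) (hμ : μ ≠ 0) :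
    Phi1 E I ρ m κ l l₀ μ = PsiA E I ρ m κ l l₀ μ := by
  have h1 : μ*(l-2*l₀) = μ*(l-l₀) - μ*l₀ := by ring
  have h2 : 2*μ*l₀ = μ*l₀ + μ*l₀ := by ring
  have h3 : 2*μ*(l-l₀) = μ*(l-l₀) + μ*(l-l₀) := by ring
  have h4 : 2*μ*l = μ*l₀ + μ*(l-l₀) + (μ*l₀ + μ*(l-l₀)) := by ring
  have h5 : μ*l = μ*l₀ + μ*(l-l₀) := by ring
  unfold Phi1 PsiA Qf
  simp only [Real.sinh_eq, Real.cosh_eq, Real.exp_neg, h1, h2, h3, h4, h5,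
    Real.exp_add, Real.exp_sub]
  have hA := Real.exp_ne_zero (μ*l₀)
  have hB := Real.exp_ne_zero (μ*(l-l₀))
  field_simp
  ring


lemma mulnn {a b : ℝ} (ha : a ≤ 0) (hb : b ≤ 0) : 0 ≤ a * b := by nlinarith

set_option maxHeartbeats 3000000 in
/-- Proposition 1: for small enough `ε` (less than half the gap between consecutive
positive zeros `μ̄ⱼ` of `Φ₀`), there is an `M > 0` such that whenever `μ̄ⱼ > M`,
the function `Φ₀ + Φ₁` has exactly one zero in `(μ̄ⱼ − ε, μ̄ⱼ + ε)`. -/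
theorem uniqueRootNearTruncatedRoot
    (E I ρ m κ l l₀ : ℝ)
    (hE : 0 < E) (hI : 0 < I) (hρ : 0 < ρ) (hm : 0 < m) (hκ : 0 < κ)
    (hl : 0 < l) (hl₀ : 0 < l₀) (hl₀l : l₀ < l)
    (hrat : ∃ r : ℚ, l₀ / l = (r : ℝ))
    (hsimple : ∀ μ : ℝ, 0 < μ → Phi0 l l₀ μ = 0 → deriv (Phi0 l l₀) μ ≠ 0)
    (μb : ℕ → ℝ) (hmono : StrictMono μb) (hpos : ∀ j, 0 < μb j)
    (hzero : ∀ j, Phi0 l l₀ (μb j) = 0)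
    (hall : ∀ x : ℝ, 0 < x → Phi0 l l₀ x = 0 → ∃ j, μb j = x) :
    ∀ ε : ℝ, 0 < ε → (∀ j, ε < (μb (j + 1) - μb j) / 2) →
      ∃ M : ℝ, 0 < M ∧ ∀ j, M < μb j →
        ∃! μ : ℝ, μ ∈ Set.Ioo (μb j - ε) (μb j + ε) ∧
          Phi0 l l₀ μ + Phi1 E I ρ m κ l l₀ μ = 0 := by
  intro ε hε hgap
  classical
  obtain ⟨T, hT, hper, hperd⟩ := phi0_periodic l l₀ hl hrat
  have hFc := phi0_cont l l₀
  have hFdc := phi0d_cont l l₀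
  -- finiteness of sublevel index sets
  have hfin : ∀ Cb : ℝ, {j : ℕ | μb j ≤ Cb}.Finite := by
    intro Cb
    by_contra hinf
    have hinf' : {j : ℕ | μb j ≤ Cb}.Infinite := hinf
    have hbd : ∀ j, μb j ≤ Cb := by
      intro j
      obtain ⟨k, hk, hjk⟩ := hinf'.exists_gt j
      exact le_trans (hmono.monotone hjk.le) hk
    have bdd : BddAbove (Set.range μb) := ⟨Cb, by rintro x ⟨j, rfl⟩; exact hbd j⟩
    have hlim := tendsto_atTop_ciSup hmono.monotone bdd
    have hzz : Phi0 l l₀ (⨆ i, μb i) = 0 := by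
      have h2 : Filter.Tendsto (fun j => Phi0 l l₀ (μb j)) Filter.atTop
          (nhds (Phi0 l l₀ (⨆ i, μb i))) := (hFc.tendsto _).comp hlim
      have h3 : Filter.Tendsto (fun j => Phi0 l l₀ (μb j)) Filter.atTop (nhds 0) := by
        simp only [hzero]; exact tendsto_const_nhds
      exact tendsto_nhds_unique h2 h3
    have hzpos : 0 < ⨆ i, μb i := lt_of_lt_of_le (hpos 0) (le_ciSup bdd 0)
    obtain ⟨k, hk⟩ := hall _ hzpos hzz
    have h1 : μb (k+1) ≤ ⨆ i, μb i := le_ciSup bdd (k+1)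
    have h2 : μb k < μb (k+1) := hmono (Nat.lt_succ_self k)
    rw [hk] at h2
    linarith
  -- translations
  have hdown : ∀ j, T < μb j → ∃ k, μb k = μb j - T := by
    intro j hj
    apply hall _ (by linarith)
    have h := hper (μb j - T)
    rw [sub_add_cancel] at h
    rw [← h]; exact hzero j
  have hup : ∀ j, ∃ k, μb k = μb j + T := by
    intro j
    apply hall _ (by linarith [hpos j, hT])
    rw [hper]; exact hzero j
  have hμb0T : μb 0 ≤ T := by
    by_contra hc
    push_neg at hc
    obtain ⟨k, hk⟩ := hdown 0 hc
    have h2 : μb k < μb 0 := by rw [hk]; linarith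
    exact absurd (hmono.lt_iff_lt.mp h2) (Nat.not_lt_zero k)
  obtain ⟨k₀, hk₀⟩ := hup 0
  have hk₀pos : 0 < k₀ := by
    have h2 : μb 0 < μb k₀ := by rw [hk₀]; linarith
    exact hmono.lt_iff_lt.mp h2
  have hεT : 2*ε < T := by
    have h1 : μb 1 ≤ μb k₀ := hmono.monotone hk₀pos
    rw [hk₀] at h1
    have h2 := hgap 0
    linarith
  -- periodic iterates
  have hpern : ∀ n : ℕ, ∀ x : ℝ, Phi0 l l₀ (x + n*T) = Phi0 l l₀ x := by
    intro n
    induction n with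
    | zero => intro x; norm_num
    | succ n ihn =>
      intro x
      push_cast
      rw [show x + ((n:ℝ)+1)*T = (x + (n:ℝ)*T) + T by ring, hper, ihn]
  have hpernd : ∀ n : ℕ, ∀ x : ℝ, Phi0d l l₀ (x + n*T) = Phi0d l l₀ x := by
    intro n
    induction n with
    | zero => intro x; norm_num
    | succ n ihn =>
      intro x
      push_cast
      rw [show x + ((n:ℝ)+1)*T = (x + (n:ℝ)*T) + T by ring, hperd, ihn]
  -- class reduction
  have hclass : ∀ j, T < μb j → ∃ k, (T < μb k ∧ μb k ≤ 2*T) ∧ ∃ n : ℕ, μb j = μb k + n*T := by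
    intro j
    induction j using Nat.strong_induction_on with
    | _ j ih =>
      intro hj
      by_cases h2 : μb j ≤ 2*T
      · exact ⟨j, ⟨hj, h2⟩, 0, by norm_num⟩
      · push_neg at h2
        obtain ⟨k₁, hk₁⟩ := hdown j (by linarith)
        have hk₁j : k₁ < j := hmono.lt_iff_lt.mp (by rw [hk₁]; linarith)
        have hTk₁ : T < μb k₁ := by rw [hk₁]; linarith
        obtain ⟨k, hkp, n, hn⟩ := ih k₁ hk₁j hTk₁
        refine ⟨k, hkp, n+1, ?_⟩
        have hjk : μb j = μb k₁ + T := by rw [hk₁]; ring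
        rw [hjk, hn]; push_cast; ring
  -- base finite set
  have hK'fin : {k : ℕ | T < μb k ∧ μb k ≤ 2*T}.Finite := (hfin (2*T)).subset (fun k hk => hk.2)
  set s : Finset ℕ := hK'fin.toFinset with hsdef
  have hsmem : ∀ k, k ∈ s ↔ (T < μb k ∧ μb k ≤ 2*T) := fun k => Set.Finite.mem_toFinset _
  have hsne : s.Nonempty := by
    refine ⟨k₀, (hsmem k₀).mpr ⟨?_, ?_⟩⟩
    · rw [hk₀]; linarith [hpos 0]
    · rw [hk₀]; linarith
  -- uniqueness of the zero in the window
  have honly : ∀ j (x : ℝ), μb j - ε ≤ x → x ≤ μb j + ε → 0 < x → Phi0 l l₀ x = 0 → x = μb j := by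
    intro j x hx1 hx2 hx0 hxz
    obtain ⟨k, hk⟩ := hall x hx0 hxz
    rcases lt_trichotomy k j with h | h | h
    · exfalso
      have h1 : μb (k+1) ≤ μb j := hmono.monotone h
      have h2 := hgap k
      rw [hk] at h2
      linarith
    · rw [← h]; exact hk.symm
    · exfalso
      have h1 : μb (j+1) ≤ μb k := hmono.monotone h
      have h2 := hgap j
      rw [hk] at h1
      linarith
  have hne2 : ∀ j (x : ℝ), 0 < μb j - ε → μb j - ε ≤ x → x ≤ μb j + ε → x ≠ μb j →
      Phi0 l l₀ x ≠ 0 := by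
    intro j x hj hx1 hx2 hxne hzx
    exact hxne (honly j x hx1 hx2 (by linarith) hzx)
  -- sign change across each zero
  have hsign : ∀ j, 0 < μb j - ε → Phi0 l l₀ (μb j - ε) * Phi0 l l₀ (μb j + ε) < 0 := by
    intro j hj
    have hFa : Phi0 l l₀ (μb j - ε) ≠ 0 := hne2 j _ hj le_rfl (by linarith) (by linarith)
    have hFb : Phi0 l l₀ (μb j + ε) ≠ 0 := hne2 j _ hj (by linarith) le_rfl (by linarith)
    rcases hFa.lt_or_gt with hFa' | hFa'
    · rcases hFb.lt_or_gt with hFb' | hFb'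
      · exfalso
        have hnonpos : ∀ x, μb j - ε ≤ x → x ≤ μb j + ε → Phi0 l l₀ x ≤ 0 := by
          intro x hx1 hx2
          by_contra hpx
          push_neg at hpx
          have hxne : x ≠ μb j := by
            intro hh; rw [hh, hzero j] at hpx; exact lt_irrefl 0 hpx
          rcases hxne.lt_or_gt with hlt | hgt
          · have hax : μb j - ε < x := by
              rcases eq_or_lt_of_le hx1 with he | hlt2
              · exfalso; rw [← he] at hpx; linarith
              · exact hlt2
            obtain ⟨y, hy, hy0⟩ := intermediate_value_Ioo hax.le hFc.continuousOn
              (Set.mem_Ioo.mpr ⟨hFa', hpx⟩)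
            have hyz : y = μb j := honly j y (by linarith [hy.1]) (by linarith [hy.2])
              (by linarith [hy.1]) hy0
            linarith [hy.2]
          · have hxb : x < μb j + ε := by
              rcases eq_or_lt_of_le hx2 with he | hlt2
              · exfalso; rw [he] at hpx; linarith
              · exact hlt2
            obtain ⟨y, hy, hy0⟩ := intermediate_value_Ioo' hxb.le hFc.continuousOn
              (Set.mem_Ioo.mpr ⟨hFb', hpx⟩)
            have hyz : y = μb j := honly j y (by linarith [hy.1]) (by linarith [hy.2])
              (by linarith [hy.1]) hy0
            linarith [hy.1]
        have hmax : IsLocalMax (Phi0 l l₀) (μb j) := by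
          have hmem : Set.Ioo (μb j - ε) (μb j + ε) ∈ nhds (μb j) :=
            Ioo_mem_nhds (by linarith) (by linarith)
          refine Filter.eventually_of_mem hmem (fun x hx => ?_)
          rw [hzero j]
          exact hnonpos x hx.1.le hx.2.le
        exact hsimple (μb j) (hpos j) (hzero j) hmax.deriv_eq_zero
      · exact mul_neg_of_neg_of_pos hFa' hFb'
    · rcases hFb.lt_or_gt with hFb' | hFb'
      · exact mul_neg_of_pos_of_neg hFa' hFb'
      · exfalso
        have hnonneg : ∀ x, μb j - ε ≤ x → x ≤ μb j + ε → 0 ≤ Phi0 l l₀ x := by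
          intro x hx1 hx2
          by_contra hpx
          push_neg at hpx
          have hxne : x ≠ μb j := by
            intro hh; rw [hh, hzero j] at hpx; exact lt_irrefl 0 hpx
          rcases hxne.lt_or_gt with hlt | hgt
          · have hax : μb j - ε < x := by
              rcases eq_or_lt_of_le hx1 with he | hlt2
              · exfalso; rw [← he] at hpx; linarith
              · exact hlt2
            obtain ⟨y, hy, hy0⟩ := intermediate_value_Ioo' hax.le hFc.continuousOn
              (Set.mem_Ioo.mpr ⟨hpx, hFa'⟩)
            have hyz : y = μb j := honly j y (by linarith [hy.1]) (by linarith [hy.2])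
              (by linarith [hy.1]) hy0
            linarith [hy.2]
          · have hxb : x < μb j + ε := by
              rcases eq_or_lt_of_le hx2 with he | hlt2
              · exfalso; rw [he] at hpx; linarith
              · exact hlt2
            obtain ⟨y, hy, hy0⟩ := intermediate_value_Ioo hxb.le hFc.continuousOn
              (Set.mem_Ioo.mpr ⟨hpx, hFb'⟩)
            have hyz : y = μb j := honly j y (by linarith [hy.1]) (by linarith [hy.2])
              (by linarith [hy.1]) hy0
            linarith [hy.1]
        have hmin : IsLocalMin (Phi0 l l₀) (μb j) := by
          have hmem : Set.Ioo (μb j - ε) (μb j + ε) ∈ nhds (μb j) :=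
            Ioo_mem_nhds (by linarith) (by linarith)
          refine Filter.eventually_of_mem hmem (fun x hx => ?_)
          rw [hzero j]
          exact hnonneg x hx.1.le hx.2.le
        exact hsimple (μb j) (hpos j) (hzero j) hmin.deriv_eq_zero
  -- minimum of |Phi0d| at base zeros
  have hcne : (s.image (fun k => |Phi0d l l₀ (μb k)|)).Nonempty := hsne.image _
  set c : ℝ := (s.image (fun k => |Phi0d l l₀ (μb k)|)).min' hcne with hcdef
  have hcpos : 0 < c := by
    rw [hcdef]
    obtain ⟨k, hks, hkv⟩ := Finset.mem_image.mp (Finset.min'_mem _ hcne)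
    rw [← hkv]
    have hzk : Phi0d l l₀ (μb k) ≠ 0 := by
      have h := hsimple (μb k) (hpos k) (hzero k)
      rwa [deriv_phi0] at h
    exact abs_pos.mpr hzk
  have hcle : ∀ k ∈ s, c ≤ |Phi0d l l₀ (μb k)| :=
    fun k hk => Finset.min'_le _ _ (Finset.mem_image_of_mem _ hk)
  clear_value c
  -- radius r around each base zero where |Phi0d| ≥ c/2
  have hrk : ∀ k : ℕ, ∃ δ : ℝ, 0 < δ ∧
      (k ∈ s → ∀ x : ℝ, |x - μb k| ≤ δ → c/2 ≤ |Phi0d l l₀ x|) := by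
    intro k
    by_cases hks : k ∈ s
    · have hcont : ContinuousAt (Phi0d l l₀) (μb k) := hFdc.continuousAt
      rw [Metric.continuousAt_iff] at hcont
      obtain ⟨δ, hδ, hδp⟩ := hcont (c/2) (by linarith)
      refine ⟨δ/2, by linarith, fun _ x hx => ?_⟩
      have hd : dist x (μb k) < δ := by rw [Real.dist_eq]; linarith
      have h5 := hδp hd
      rw [Real.dist_eq] at h5
      have h1 := hcle k hks
      have h3 := abs_sub_abs_le_abs_sub (Phi0d l l₀ (μb k)) (Phi0d l l₀ x)
      rw [abs_sub_comm] at h3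
      linarith
    · exact ⟨1, one_pos, fun h => absurd h hks⟩
  choose rf hrfpos hrfprop using hrk
  have hrne : (s.image rf).Nonempty := hsne.image _
  set r : ℝ := min ((s.image rf).min' hrne) (ε/2) with hrdef
  have hrpos : 0 < r := by
    rw [hrdef]
    refine lt_min ?_ (by linarith)
    obtain ⟨k, hks, hkv⟩ := Finset.mem_image.mp (Finset.min'_mem _ hrne)
    rw [← hkv]; exact hrfpos k
  have hrε : r ≤ ε/2 := min_le_right _ _
  have hrprop : ∀ k ∈ s, ∀ x : ℝ, |x - μb k| ≤ r → c/2 ≤ |Phi0d l l₀ x| := by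
    intro k hks x hx
    refine hrfprop k hks x (le_trans hx ?_)
    exact le_trans (min_le_left _ _) (Finset.min'_le _ _ (Finset.mem_image_of_mem rf hks))
  clear_value r
  -- uniform lower bound for |Phi0| away from the zero
  have hδk : ∀ k : ℕ, ∃ d : ℝ, 0 < d ∧ (k ∈ s → ∀ x : ℝ, μb k - ε ≤ x → x ≤ μb k + ε →
      r ≤ |x - μb k| → d ≤ |Phi0 l l₀ x|) := by
    intro k
    by_cases hks : k ∈ s
    · have hTk := ((hsmem k).mp hks).1
      have hak : 0 < μb k - ε := by linarith
      have hcomp : IsCompact (Set.Icc (μb k - ε) (μb k - r) ∪ Set.Icc (μb k + r) (μb k + ε)) :=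
        isCompact_Icc.union isCompact_Icc
      have hSne : (Set.Icc (μb k - ε) (μb k - r) ∪ Set.Icc (μb k + r) (μb k + ε)).Nonempty :=
        ⟨μb k - ε, Or.inl ⟨le_rfl, by linarith⟩⟩
      obtain ⟨y, hyS, hymin⟩ := hcomp.exists_isMinOn hSne (hFc.abs.continuousOn)
      refine ⟨|Phi0 l l₀ y|, ?_, ?_⟩
      · have hy1 : μb k - ε ≤ y ∧ y ≤ μb k + ε := by
          rcases hyS with h | h
          · exact ⟨h.1, by linarith [h.2]⟩
          · exact ⟨by linarith [h.1], h.2⟩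
        have hyne : y ≠ μb k := by
          rcases hyS with h | h
          · intro hh; rw [hh] at h; linarith [h.2]
          · intro hh; rw [hh] at h; linarith [h.1]
        exact abs_pos.mpr (hne2 k y hak hy1.1 hy1.2 hyne)
      · intro _ x hx1 hx2 hxr
        have hxS : x ∈ Set.Icc (μb k - ε) (μb k - r) ∪ Set.Icc (μb k + r) (μb k + ε) := by
          rcases le_abs.mp hxr with h | h
          · exact Or.inr ⟨by linarith, hx2⟩
          · exact Or.inl ⟨hx1, by linarith⟩
        exact hymin hxS
    · exact ⟨1, one_pos, fun h => absurd h hks⟩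
  choose df hdfpos hdfprop using hδk
  have hdne : (s.image df).Nonempty := hsne.image _
  set δ₀ : ℝ := (s.image df).min' hdne with hδdef
  have hδ₀pos : 0 < δ₀ := by
    rw [hδdef]
    obtain ⟨k, hks, hkv⟩ := Finset.mem_image.mp (Finset.min'_mem _ hdne)
    rw [← hkv]; exact hdfpos k
  have hδ₀prop : ∀ k ∈ s, ∀ x : ℝ, μb k - ε ≤ x → x ≤ μb k + ε → r ≤ |x - μb k| →
      δ₀ ≤ |Phi0 l l₀ x| := by
    intro k hks x h1 h2 h3
    exact le_trans (Finset.min'_le _ _ (Finset.mem_image_of_mem df hks)) (hdfprop k hks x h1 h2 h3)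
  clear_value δ₀
  -- transfer to large zeros
  have htrans : ∀ j, 2*T < μb j →
      (∀ x : ℝ, μb j - ε ≤ x → x ≤ μb j + ε → r ≤ |x - μb j| → δ₀ ≤ |Phi0 l l₀ x|)
      ∧ (∀ x : ℝ, |x - μb j| ≤ r → c/2 ≤ |Phi0d l l₀ x|) := by
    intro j hj
    obtain ⟨k, ⟨hk1, hk2⟩, n, hn⟩ := hclass j (by linarith)
    have hks : k ∈ s := (hsmem k).mpr ⟨hk1, hk2⟩
    constructor
    · intro x h1 h2 h3
      have he : Phi0 l l₀ x = Phi0 l l₀ (x - n*T) := by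
        rw [← hpern n (x - n*T), sub_add_cancel]
      rw [he]
      refine hδ₀prop k hks _ (by rw [hn] at h1; linarith) (by rw [hn] at h2; linarith) ?_
      rw [show x - n*T - μb k = x - μb j by rw [hn]; ring]
      exact h3
    · intro x h1
      have he : Phi0d l l₀ x = Phi0d l l₀ (x - n*T) := by
        rw [← hpernd n (x - n*T), sub_add_cancel]
      rw [he]
      refine hrprop k hks _ ?_
      rw [show x - n*T - μb k = x - μb j by rw [hn]; ring]
      exact h1
  -- choose M
  obtain ⟨C, hC, hCb⟩ := psiA_bound E I ρ m κ l l₀ hE hI hρ hm hκ hl hl₀ hl₀l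
  set η : ℝ := min δ₀ (c/2) with hηdef
  have hηδ : η ≤ δ₀ := min_le_left _ _
  have hηc : η ≤ c/2 := min_le_right _ _
  have hηpos : 0 < η := lt_min hδ₀pos (by linarith)
  clear_value η
  refine ⟨max (2*T + ε + 1) (ε + 1 + 2*C/η), ?_, ?_⟩
  · have h1 : (0:ℝ) < 2*T + ε + 1 := by linarith
    exact lt_of_lt_of_le h1 (le_max_left _ _)
  intro j hMj
  have hj2T : 2*T < μb j := by
    have := lt_of_le_of_lt (le_max_left (2*T + ε + 1) (ε + 1 + 2*C/η)) hMj
    linarith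
  have hjC : ε + 1 + 2*C/η < μb j :=
    lt_of_le_of_lt (le_max_right (2*T + ε + 1) (ε + 1 + 2*C/η)) hMj
  obtain ⟨hδ₀T, hcT⟩ := htrans j hj2T
  have hab : μb j - ε < μb j + ε := by linarith
  have hCη : 0 < 2*C/η := by positivity
  have ha1 : 1 ≤ μb j - ε := by linarith
  have ha0 : 0 < μb j - ε := by linarith
  -- smallness of PsiA on the window
  have hψ : ∀ x : ℝ, μb j - ε ≤ x →
      |PsiA E I ρ m κ l l₀ x| < η ∧ |PsiAd E I ρ m κ l l₀ x| < η := by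
    intro x hx
    have hx1 : 1 ≤ x := le_trans ha1 hx
    have hx0 : 0 < x := by linarith
    obtain ⟨b1, b2⟩ := hCb x hx1
    have hxbig : 2*C/η < x := by linarith
    have hkey : C/x < η := by
      rw [div_lt_iff₀ hx0]
      have h2 : η * (2*C/η) = 2*C := by field_simp
      nlinarith [mul_lt_mul_of_pos_left hxbig hηpos]
    exact ⟨lt_of_le_of_lt b1 hkey, lt_of_le_of_lt b2 hkey⟩
  -- properties of H = Phi0 + PsiA
  have hHd : ∀ x : ℝ, x ≠ 0 → HasDerivAt (fun w => Phi0 l l₀ w + PsiA E I ρ m κ l l₀ w)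
      (Phi0d l l₀ x + PsiAd E I ρ m κ l l₀ x) x :=
    fun x hx => (hasDerivAt_phi0 l l₀ x).add (hasDerivAt_psiA E I ρ m κ l l₀ x hx)
  have hHcontOn : ContinuousOn (fun w => Phi0 l l₀ w + PsiA E I ρ m κ l l₀ w)
      (Set.Icc (μb j - ε) (μb j + ε)) := by
    intro x hx
    exact ((hHd x (by have := hx.1; intro hh; rw [hh] at this; linarith)).continuousAt).continuousWithinAt
  -- endpoint bounds
  have hεabs : ∀ u : ℝ, |u - ε - u| = ε := by
    intro u; rw [show u - ε - u = -ε by ring, abs_neg, abs_of_pos hε]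
  have hεabs' : ∀ u : ℝ, |u + ε - u| = ε := by
    intro u; rw [show u + ε - u = ε by ring, abs_of_pos hε]
  have hFaδ : δ₀ ≤ |Phi0 l l₀ (μb j - ε)| := by
    refine hδ₀T _ le_rfl (by linarith) ?_
    rw [hεabs]; linarith
  have hFbδ : δ₀ ≤ |Phi0 l l₀ (μb j + ε)| := by
    refine hδ₀T _ (by linarith) le_rfl ?_
    rw [hεabs']; linarith
  have hsgn := hsign j ha0
  -- existence
  have hexists : ∃ x ∈ Set.Ioo (μb j - ε) (μb j + ε),
      Phi0 l l₀ x + PsiA E I ρ m κ l l₀ x = 0 := by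
    rcases lt_trichotomy (Phi0 l l₀ (μb j - ε)) 0 with hFa | hFa | hFa
    · have hFb : 0 < Phi0 l l₀ (μb j + ε) :=
        lt_of_not_ge fun h => absurd hsgn (not_lt.mpr (mulnn hFa.le h))
      have hHa : Phi0 l l₀ (μb j - ε) + PsiA E I ρ m κ l l₀ (μb j - ε) < 0 := by
        have h1 := (hψ _ le_rfl).1
        have h2 : Phi0 l l₀ (μb j - ε) ≤ -δ₀ := by
          rw [abs_of_neg hFa] at hFaδ; linarith
        have h3 := abs_lt.mp h1
        linarith
      have hHb : 0 < Phi0 l l₀ (μb j + ε) + PsiA E I ρ m κ l l₀ (μb j + ε) := by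
        have h1 := (hψ _ (by linarith : μb j - ε ≤ μb j + ε)).1
        have h2 : δ₀ ≤ Phi0 l l₀ (μb j + ε) := by
          rw [abs_of_pos hFb] at hFbδ; linarith
        have h3 := abs_lt.mp h1
        linarith
      obtain ⟨x, hx, hx0⟩ := intermediate_value_Ioo hab.le hHcontOn
        (Set.mem_Ioo.mpr ⟨hHa, hHb⟩)
      exact ⟨x, hx, hx0⟩
    · exfalso; rw [hFa, zero_mul] at hsgn; exact lt_irrefl 0 hsgn
    · have hFb : Phi0 l l₀ (μb j + ε) < 0 :=
        lt_of_not_ge fun h => absurd hsgn (not_lt.mpr (mul_nonneg hFa.le h))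
      have hHa : 0 < Phi0 l l₀ (μb j - ε) + PsiA E I ρ m κ l l₀ (μb j - ε) := by
        have h1 := (hψ _ le_rfl).1
        have h2 : δ₀ ≤ Phi0 l l₀ (μb j - ε) := by
          rw [abs_of_pos hFa] at hFaδ; linarith
        have h3 := abs_lt.mp h1
        linarith
      have hHb : Phi0 l l₀ (μb j + ε) + PsiA E I ρ m κ l l₀ (μb j + ε) < 0 := by
        have h1 := (hψ _ (by linarith : μb j - ε ≤ μb j + ε)).1
        have h2 : Phi0 l l₀ (μb j + ε) ≤ -δ₀ := by
          rw [abs_of_neg hFb] at hFbδ; linarith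
        have h3 := abs_lt.mp h1
        linarith
      obtain ⟨x, hx, hx0⟩ := intermediate_value_Ioo' hab.le hHcontOn
        (Set.mem_Ioo.mpr ⟨hHb, hHa⟩)
      exact ⟨x, hx, hx0⟩
  obtain ⟨x₀, hx₀mem, hx₀zero⟩ := hexists
  -- any H-zero in the window is close to μb j
  have hclose : ∀ w ∈ Set.Ioo (μb j - ε) (μb j + ε),
      Phi0 l l₀ w + PsiA E I ρ m κ l l₀ w = 0 → |w - μb j| < r := by
    intro w hw hw0
    by_contra hcon
    push_neg at hcon
    have h1 := hδ₀T w hw.1.le hw.2.le hcon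
    have h2 := (hψ w hw.1.le).1
    have h3 : Phi0 l l₀ w = - PsiA E I ρ m κ l l₀ w := by linarith
    rw [h3, abs_neg] at h1
    linarith
  -- uniqueness of H-zeros
  have huniq : ∀ u v : ℝ, u ∈ Set.Ioo (μb j - ε) (μb j + ε) →
      v ∈ Set.Ioo (μb j - ε) (μb j + ε) → u < v →
      Phi0 l l₀ u + PsiA E I ρ m κ l l₀ u = 0 →
      Phi0 l l₀ v + PsiA E I ρ m κ l l₀ v = 0 → False := by
    intro u v hu hv huv hu0 hv0
    have hur := hclose u hu hu0
    have hvr := hclose v hv hv0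
    obtain ⟨ξ, hξ, hξ0⟩ := exists_hasDerivAt_eq_zero huv
      (hHcontOn.mono (Set.Icc_subset_Icc hu.1.le hv.2.le))
      (hu0.trans hv0.symm)
      (fun w hw => hHd w (by have h1 := hw.1; intro hh; rw [hh] at h1; linarith [hu.1]))
    have hξab : μb j - ε ≤ ξ := by linarith [hξ.1, hu.1]
    have hξr : |ξ - μb j| ≤ r := by
      have h1 := abs_lt.mp hur
      have h2 := abs_lt.mp hvr
      exact abs_le.mpr ⟨by linarith [hξ.1], by linarith [hξ.2]⟩
    have h5 := hcT ξ hξr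
    have h6 := (hψ ξ hξab).2
    have h7 : Phi0d l l₀ ξ = - PsiAd E I ρ m κ l l₀ ξ := by linarith
    rw [h7, abs_neg] at h5
    linarith
  -- conclude
  have hconv : ∀ w ∈ Set.Ioo (μb j - ε) (μb j + ε),
      (Phi0 l l₀ w + Phi1 E I ρ m κ l l₀ w = 0 ↔ Phi0 l l₀ w + PsiA E I ρ m κ l l₀ w = 0) := by
    intro w hw
    rw [phi1_eq_psiA E I ρ m κ l l₀ w (ne_of_gt hE) (ne_of_gt hI) (ne_of_gt hm)
      (by have := hw.1; intro hh; rw [hh] at this; linarith)]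
  refine ⟨x₀, ⟨hx₀mem, (hconv x₀ hx₀mem).mpr hx₀zero⟩, ?_⟩
  rintro y ⟨hymem, hyzero⟩
  have hy0 : Phi0 l l₀ y + PsiA E I ρ m κ l l₀ y = 0 := (hconv y hymem).mp hyzero
  rcases lt_trichotomy y x₀ with h | h | h
  · exact absurd (huniq y x₀ hymem hx₀mem h hy0 hx₀zero) (fun hf => hf)
  · exact h
  · exact absurd (huniq x₀ y hx₀mem hymem h hx₀zero hy0) (fun hf => hf)
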